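/- Let c and e be real numbers with e > 1, e > c and c ≠ 1. Then the series Σ_{k=0}^∞ (c)_k/((k+1)·(e)_k) converges and Σ_{k=0}^∞ (c)_k/((k+1)·(e)_k) = ((e−1)/(c−1))·(ψ(e−1) − ψ(e−c)). (This is the evaluation ₃F₂(1,1,c; 2,e; 1) = ((e−1)/(c−1))(ψ(e−1) − ψ(e−c)).) -/

import Mathlib

open Real

/-- Rising factorial (Pochhammer symbol) `(a)_k`. -/
noncomputable def poch (a : ℝ) (k : ℕ) : ℝ := (ascPochhammer ℝ k).eval a

/-- Digamma function `ψ(x) = Γ'(x)/Γ(x)`. -/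
noncomputable def psi (x : ℝ) : ℝ := deriv Real.Gamma x / Real.Gamma x

/-!
Put `a = c - 1` and `b = e - 1`. Since `(c - 1) (c)_k = (a)_{k+1}`, the series is `b / a` times
`T(a, b) = ∑ₘ (a)_{m+1} / ((m + 1) (b)_{m+1})`. As
`1/(b)_{m+1} - 1/(b+1)_{m+1} = (m + 1)/(b)_{m+2}`, the difference `T(a, b) - T(a, b + 1)` is the
tail `∑_{n ≥ 1} (a)_n / (b)_{n+1}` of a telescoping series:
`(a)_n/(b)_n - (a)_{n+1}/(b)_{n+1} = (b - a) (a)_n/(b)_{n+1}` with `(a)_n/(b)_n → 0` by Euler's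
limit formula for `Γ`, so it equals `1/(b - a) - 1/b`. By `ψ(x + 1) = ψ(x) + 1/x`, this is also
the increment of `ψ(b) - ψ(b - a)`. Hence `T(a, b) - (ψ(b) - ψ(b - a))` is invariant under
`b ↦ b + 1`; along `b + n` it tends to `0`, because `T(a, b + n) = O(1/n)` and `ψ` is monotone
(`log Γ` is convex). So it vanishes.
-/

open Filter Topology Finset

section Pochhammer

variable (a : ℝ) (m n : ℕ)

lemma poch_eq_prod_range : poch a n = ∏ j ∈ range n, (a + j) := by
  induction n with
  | zero => simp [poch]
  | succ n ih => rw [poch, ascPochhammer_succ_eval, ← poch, ih, prod_range_succ]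

lemma poch_zero : poch a 0 = 1 := by simp [poch]

lemma poch_succ : poch a (n + 1) = poch a n * (a + n) := by
  simp only [poch_eq_prod_range, prod_range_succ]

lemma poch_succ_left : poch a (n + 1) = a * poch (a + 1) n := by
  simp only [poch_eq_prod_range, prod_range_succ']
  simp [mul_comm, add_assoc, add_comm (1 : ℝ)]

lemma poch_add : poch a (m + n) = poch a m * poch (a + m) n := by
  simp only [poch_eq_prod_range, prod_range_add, Nat.cast_add, add_assoc]

variable {a}

lemma poch_pos (ha : 0 < a) : 0 < poch a n := by
  rw [poch_eq_prod_range]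
  exact prod_pos fun j _ => by positivity

lemma poch_le_poch {b : ℝ} (ha : 0 ≤ a) (hab : a ≤ b) : poch a n ≤ poch b n := by
  simp only [poch_eq_prod_range]
  exact prod_le_prod (fun j _ => by positivity) fun j _ => by linarith

end Pochhammer

lemma GammaSeq_eq_div_poch (s : ℝ) (n : ℕ) :
    GammaSeq s n = (n : ℝ) ^ s * n.factorial / poch s (n + 1) := by
  rw [GammaSeq, poch_eq_prod_range]

lemma tendsto_poch_div_poch {a b : ℝ} (ha : 0 < a) (hab : a < b) :
    Tendsto (fun n => poch a n / poch b n) atTop (𝓝 0) := by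
  have hpow : Tendsto (fun n : ℕ => (n : ℝ) ^ (a - b)) atTop (𝓝 0) := by
    have := (tendsto_rpow_neg_atTop (sub_pos.2 hab)).comp tendsto_natCast_atTop_atTop
    simpa [Function.comp_def] using this
  have hlim := hpow.mul ((GammaSeq_tendsto_Gamma b).div (GammaSeq_tendsto_Gamma a)
    (Gamma_pos_of_pos ha).ne')
  rw [zero_mul] at hlim
  rw [← tendsto_add_atTop_iff_nat 1]
  refine hlim.congr' ?_
  filter_upwards [eventually_gt_atTop 0] with n hn
  have hn' : (0 : ℝ) < n := Nat.cast_pos.2 hn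
  have := poch_pos (n + 1) ha
  have := poch_pos (n + 1) (ha.trans hab)
  rw [Pi.div_apply, GammaSeq_eq_div_poch, GammaSeq_eq_div_poch, rpow_sub hn']
  field_simp

section Telescoping

variable {a b : ℝ}

lemma poch_div_poch_sub_succ (hb : 0 < b) (n : ℕ) :
    poch a n / poch b n - poch a (n + 1) / poch b (n + 1)
      = (b - a) * (poch a n / poch b (n + 1)) := by
  have := poch_pos n hb
  have := poch_pos (n + 1) hb
  rw [poch_succ a, poch_succ b] at *
  field_simp
  ring

lemma mul_sum_range_poch_div_poch_succ (hb : 0 < b) (N : ℕ) :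
    (b - a) * ∑ n ∈ range N, poch a n / poch b (n + 1) = 1 - poch a N / poch b N := by
  induction N with
  | zero => simp [poch_zero]
  | succ N ih => rw [sum_range_succ, mul_add, ih, ← poch_div_poch_sub_succ hb]; ring

lemma hasSum_poch_div_poch_succ_of_pos (ha : 0 < a) (hab : a < b) :
    HasSum (fun n => poch a n / poch b (n + 1)) (1 / (b - a)) := by
  have hb := ha.trans hab
  rw [hasSum_iff_tendsto_nat_of_nonneg fun n => (div_pos (poch_pos n ha) (poch_pos _ hb)).le]
  have hlim := ((tendsto_poch_div_poch ha hab).const_sub 1).div_const (b - a)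
  rw [sub_zero] at hlim
  refine hlim.congr fun N => ?_
  rw [← mul_sum_range_poch_div_poch_succ hb, mul_div_cancel_left₀ _ (sub_pos.2 hab).ne']

/-- After a shift of the index by `K`, the parameter `a + K` is positive, so the terms are
positive and convergence of the partial sums suffices. -/
lemma hasSum_poch_div_poch_succ (hb : 0 < b) (hab : a < b) :
    HasSum (fun n => poch a n / poch b (n + 1)) (1 / (b - a)) := by
  obtain ⟨K, hK⟩ := exists_nat_gt (-a)
  have hshift : ∀ n, poch a (n + K) / poch b (n + K + 1)
      = poch a K / poch b K * (poch (a + K) n / poch (b + K) (n + 1)) := by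
    intro n
    have := poch_pos K hb
    rw [add_comm n, poch_add, add_assoc, poch_add]
    field_simp
  have hsum := (hasSum_poch_div_poch_succ_of_pos (a := a + K) (b := b + K) (by linarith)
    (by linarith)).mul_left (poch a K / poch b K)
  have hval : 1 / (b - a) - ∑ n ∈ range K, poch a n / poch b (n + 1)
      = poch a K / poch b K * (1 / (b + K - (a + K))) := by
    have hba : b - a ≠ 0 := (sub_pos.2 hab).ne'
    have hr : poch a K / poch b K = 1 - (b - a) * ∑ n ∈ range K, poch a n / poch b (n + 1) := by
      linarith [mul_sum_range_poch_div_poch_succ (a := a) hb K]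
    rw [show b + K - (a + K) = b - a by ring, hr]
    field_simp
  rw [← hasSum_nat_add_iff' K, hval]
  simp_rw [hshift]
  exact hsum

end Telescoping

section Digamma

lemma differentiableAt_Gamma_of_pos {x : ℝ} (hx : 0 < x) : DifferentiableAt ℝ Gamma x :=
  differentiableAt_Gamma fun m => by linarith [(Nat.cast_nonneg m : (0 : ℝ) ≤ m)]

lemma psi_add_one {x : ℝ} (hx : 0 < x) : psi (x + 1) = psi x + 1 / x := by
  have hderiv : deriv Gamma (x + 1) = Gamma x + x * deriv Gamma x := by
    have heq : (fun s => Gamma (s + 1)) =ᶠ[𝓝 x] fun s => s * Gamma s := by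
      filter_upwards [eventually_gt_nhds hx] with s hs using Gamma_add_one hs.ne'
    rw [← deriv_comp_add_const, heq.deriv_eq,
      ((hasDerivAt_id' x).fun_mul (differentiableAt_Gamma_of_pos hx).hasDerivAt).deriv]
    simp
  have := (Gamma_pos_of_pos hx).ne'
  rw [psi, psi, hderiv, Gamma_add_one hx.ne']
  field_simp
  ring

lemma psi_add_nat {x : ℝ} (hx : 0 < x) (n : ℕ) :
    psi (x + n) = psi x + ∑ i ∈ range n, 1 / (x + i) := by
  induction n with
  | zero => simp
  | succ n ih =>
    rw [Nat.cast_succ, ← add_assoc, psi_add_one (by positivity), ih, sum_range_succ, add_assoc]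

lemma psi_monotoneOn : MonotoneOn psi (Set.Ioi 0) := by
  have hdiff : ∀ x ∈ Set.Ioi (0 : ℝ), DifferentiableAt ℝ (log ∘ Gamma) x := fun x hx =>
    (differentiableAt_Gamma_of_pos hx).log (Gamma_pos_of_pos hx).ne'
  refine (convexOn_log_Gamma.monotoneOn_deriv hdiff).congr fun x hx => ?_
  rw [Function.comp_def, deriv.log (differentiableAt_Gamma_of_pos hx)
    (Gamma_pos_of_pos hx).ne', psi]

lemma tendsto_psi_add_nat_sub_psi_add_nat_of_le {x y : ℝ} (hx : 0 < x) (hxy : x ≤ y) :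
    Tendsto (fun n : ℕ => psi (y + n) - psi (x + n)) atTop (𝓝 0) := by
  obtain ⟨N, hN⟩ := exists_nat_ge (y - x)
  have hxn : ∀ n : ℕ, 0 < x + n := fun n => by positivity
  have hlower : ∀ n : ℕ, 0 ≤ psi (y + n) - psi (x + n) := fun n =>
    sub_nonneg.2 (psi_monotoneOn (hxn n) (by simp; linarith [hxn n]) (by linarith))
  have hupper : ∀ n : ℕ, psi (y + n) - psi (x + n) ≤ N * (1 / (x + n)) := by
    intro n
    have hmono : psi (y + n) ≤ psi (x + n + N) :=
      psi_monotoneOn (by simp; linarith [hxn n]) (by simp; positivity) (by linarith)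
    have hsum : ∑ i ∈ range N, 1 / (x + n + i) ≤ N * (1 / (x + n)) := by
      simpa using sum_le_sum fun i (_ : i ∈ range N) =>
        one_div_le_one_div_of_le (hxn n) (le_add_of_nonneg_right (Nat.cast_nonneg i))
    linarith [psi_add_nat (hxn n) N]
  have hbound : Tendsto (fun n : ℕ => (N : ℝ) * (1 / (x + n))) atTop (𝓝 0) := by
    have hinv := (tendsto_const_nhds (x := x)).add_atTop tendsto_natCast_atTop_atTop
    simpa using hinv.inv_tendsto_atTop.const_mul (N : ℝ)
  exact tendsto_of_tendsto_of_tendsto_of_le_of_le tendsto_const_nhds hbound hlower hupper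

lemma tendsto_psi_add_nat_sub_psi_add_nat {x y : ℝ} (hx : 0 < x) (hy : 0 < y) :
    Tendsto (fun n : ℕ => psi (y + n) - psi (x + n)) atTop (𝓝 0) := by
  rcases le_total x y with hxy | hyx
  · exact tendsto_psi_add_nat_sub_psi_add_nat_of_le hx hxy
  · simpa using (tendsto_psi_add_nat_sub_psi_add_nat_of_le hy hyx).neg

end Digamma

noncomputable def psiDiffTerm (a b : ℝ) (m : ℕ) : ℝ :=
  poch a (m + 1) / ((m + 1) * poch b (m + 1))

section PsiDiffSeries

variable {a b : ℝ}

lemma psiDiffTerm_sub_psiDiffTerm_add_one (hb : 0 < b) (m : ℕ) :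
    psiDiffTerm a b m - psiDiffTerm a (b + 1) m = poch a (m + 1) / poch b (m + 1 + 1) := by
  have hP := poch_pos (m + 1) hb
  have hsucc : poch b (m + 1 + 1) = poch b (m + 1) * (b + (m + 1)) := by
    rw [poch_succ]; push_cast; rfl
  have hshift : poch (b + 1) (m + 1) = poch b (m + 1) * (b + (m + 1)) / b := by
    rw [← hsucc, poch_succ_left b (m + 1), mul_div_cancel_left₀ _ hb.ne']
  rw [psiDiffTerm, psiDiffTerm, hshift, hsucc]
  field_simp
  ring

lemma abs_psiDiffTerm_le (hb : 0 < b) (m : ℕ) :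
    |psiDiffTerm a b m| ≤ (b + 1) * |poch a (m + 1) / poch b (m + 1 + 1)| := by
  have hP := poch_pos (m + 1) hb
  have hm : (0 : ℝ) < m + 1 := by positivity
  have hfrac : 1 / ((m : ℝ) + 1) ≤ (b + 1) / (b + (m + 1)) := by
    rw [div_le_div_iff₀ hm (by positivity)]
    nlinarith
  calc |psiDiffTerm a b m| = |poch a (m + 1)| / poch b (m + 1) * (1 / (m + 1)) := by
        rw [psiDiffTerm, abs_div, abs_of_pos (mul_pos hm hP)]
        field_simp
    _ ≤ |poch a (m + 1)| / poch b (m + 1) * ((b + 1) / (b + (m + 1))) := by gcongr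
    _ = (b + 1) * |poch a (m + 1) / poch b (m + 1 + 1)| := by
        rw [poch_succ b (m + 1), abs_div, abs_of_pos (mul_pos hP (by positivity))]
        push_cast
        field_simp

lemma summable_psiDiffTerm (hb : 0 < b) (hab : a < b) : Summable (psiDiffTerm a b) :=
  .of_norm_bounded ((((summable_nat_add_iff 1).2
    (hasSum_poch_div_poch_succ hb hab).summable).abs).mul_left (b + 1)) (abs_psiDiffTerm_le hb)

lemma tsum_psiDiffTerm_sub_tsum_psiDiffTerm_add_one (hb : 0 < b) (hab : a < b) :
    ∑' m, psiDiffTerm a b m - ∑' m, psiDiffTerm a (b + 1) m = 1 / (b - a) - 1 / b := by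
  have hsum : HasSum (fun m => psiDiffTerm a b m - psiDiffTerm a (b + 1) m)
      (1 / (b - a) - 1 / b) := by
    have := (hasSum_nat_add_iff' 1).2 (hasSum_poch_div_poch_succ hb hab)
    simpa [psiDiffTerm_sub_psiDiffTerm_add_one hb, poch] using this
  rw [← hsum.tsum_eq, (summable_psiDiffTerm hb hab).tsum_sub
    (summable_psiDiffTerm (by linarith) (by linarith))]

lemma abs_psiDiffTerm_le_of_le {b' : ℝ} (hb : 0 < b) (hbb' : b ≤ b') (m : ℕ) :
    |psiDiffTerm a b' m| ≤ b / b' * |psiDiffTerm a b m| := by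
  have hb' := hb.trans_le hbb'
  have hP := poch_pos m (by linarith : 0 < b + 1)
  have hle := poch_le_poch m (by linarith : 0 ≤ b + 1) (by linarith : b + 1 ≤ b' + 1)
  have hm : (0 : ℝ) < m + 1 := by positivity
  calc |psiDiffTerm a b' m| = |poch a (m + 1)| / ((m + 1) * (b' * poch (b' + 1) m)) := by
        rw [psiDiffTerm, poch_succ_left b' m, abs_div,
          abs_of_pos (mul_pos hm (mul_pos hb' (poch_pos m (by linarith))))]
    _ ≤ |poch a (m + 1)| / ((m + 1) * (b' * poch (b + 1) m)) := by gcongr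
    _ = b / b' * |psiDiffTerm a b m| := by
        rw [psiDiffTerm, poch_succ_left b m, abs_div, abs_of_pos (mul_pos hm (mul_pos hb hP))]
        field_simp

lemma tendsto_tsum_psiDiffTerm_add_nat (hb : 0 < b) (hab : a < b) :
    Tendsto (fun n : ℕ => ∑' m, psiDiffTerm a (b + n) m) atTop (𝓝 0) := by
  set C := ∑' m, |psiDiffTerm a b m|
  have hbound : ∀ n : ℕ, ‖∑' m, psiDiffTerm a (b + n) m‖ ≤ b / (b + n) * C := fun n =>
    tsum_of_norm_bounded ((summable_psiDiffTerm hb hab).abs.hasSum.mul_left _)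
      fun m => abs_psiDiffTerm_le_of_le hb (by simp) m
  refine squeeze_zero_norm hbound ?_
  have hinv := (tendsto_const_nhds (x := b)).add_atTop tendsto_natCast_atTop_atTop
  simpa [div_eq_mul_inv] using (hinv.inv_tendsto_atTop.const_mul b).mul_const C

theorem tsum_psiDiffTerm (hb : 0 < b) (hab : a < b) :
    ∑' m, psiDiffTerm a b m = psi b - psi (b - a) := by
  set G : ℝ → ℝ := fun y => ∑' m, psiDiffTerm a y m - (psi y - psi (y - a)) with hG
  have hstep : ∀ n : ℕ, G (b + (n + 1 : ℕ)) = G (b + n) := by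
    intro n
    have hbn : 0 < b + n := by positivity
    have hT := tsum_psiDiffTerm_sub_tsum_psiDiffTerm_add_one hbn (by linarith)
    have hψ := psi_add_one hbn
    have hψ' := psi_add_one (sub_pos.2 (by linarith : a < b + n))
    simp only [hG, Nat.cast_succ, ← add_assoc, add_sub_right_comm _ (1 : ℝ) a]
    linarith
  have hconst : ∀ n : ℕ, G (b + n) = G b := by
    intro n
    induction n with
    | zero => simp
    | succ n ih => rw [hstep, ih]
  have hlim : Tendsto (fun n : ℕ => G (b + n)) atTop (𝓝 0) := by
    have := (tendsto_tsum_psiDiffTerm_add_nat hb hab).sub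
      (tendsto_psi_add_nat_sub_psi_add_nat (sub_pos.2 hab) hb)
    simp only [sub_zero] at this
    refine this.congr fun n => ?_
    simp only [hG, add_sub_right_comm b (n : ℝ) a]
  simp only [hconst] at hlim
  have hG0 := tendsto_const_nhds_iff.1 hlim
  simp only [hG] at hG0
  linarith

end PsiDiffSeries

/-- `₃F₂(1,1,c;2,e;1) = ((e-1)/(c-1))(ψ(e-1) - ψ(e-c))`. -/
theorem threeF2_one_one (c e : ℝ) (he1 : 1 < e) (hec : c < e) (hc : c ≠ 1) :
    Summable (fun k : ℕ => poch c k / ((k + 1 : ℝ) * poch e k)) ∧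
    ∑' k : ℕ, poch c k / ((k + 1 : ℝ) * poch e k) =
      ((e - 1) / (c - 1)) * (psi (e - 1) - psi (e - c)) := by
  have hb : 0 < e - 1 := by linarith
  have hab : c - 1 < e - 1 := by linarith
  have hterm : ∀ k : ℕ, poch c k / ((k + 1 : ℝ) * poch e k)
      = (e - 1) / (c - 1) * psiDiffTerm (c - 1) (e - 1) k := by
    intro k
    have := poch_pos k (by linarith : 0 < e)
    have := sub_ne_zero.2 hc
    rw [psiDiffTerm, poch_succ_left, poch_succ_left, sub_add_cancel, sub_add_cancel]
    field_simp
  simp_rw [hterm]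
  refine ⟨(summable_psiDiffTerm hb hab).mul_left _, ?_⟩
  rw [tsum_mul_left, tsum_psiDiffTerm hb hab, sub_sub_sub_cancel_right]
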